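/- arXiv:2103.01150 — 3 statements merged into one kernel-verified Lean document; each statement's English description precedes it below -/
import Mathlib

section
/- Let A be an n×n complex matrix with constant row sum c ∈ ℂ (every row sums to c). If |c| = ‖A‖₂, then every column of A also sums to c; that is, A is a c-generalized doubly stochastic matrix. -/
/-!
Constant row sums `c` say that the all-ones vector `𝟙` is an eigenvector of `A` for `c`.
An eigenvector `x` of an operator `T` whose eigenvalue has modulus `‖T‖` is also an eigenvector
of `T†`, for the conjugate eigenvalue: `⟪T† x, c̄ x⟫ = |c|² ‖x‖²`, so expanding gives
`‖T† x - c̄ x‖² = ‖T† x‖² - |c|² ‖x‖² ≤ 0`. For `T = A` and `x = 𝟙`, `Aᴴ 𝟙 = c̄ 𝟙` is the claim.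
-/

open ComplexConjugate InnerProductSpace

/-- The spectral norm (largest singular value / operator 2-norm) of a complex matrix. -/
noncomputable def specNorm {n : ℕ} (A : Matrix (Fin n) (Fin n) ℂ) : ℝ :=
  ‖Matrix.toEuclideanCLM (𝕜 := ℂ) A‖

/-- The spectral radius of a complex matrix. -/
noncomputable def specRad {n : ℕ} (A : Matrix (Fin n) (Fin n) ℂ) : ℝ :=
  sSup ((fun z : ℂ => ‖z‖) '' spectrum ℂ A)

theorem ContinuousLinearMap.adjoint_apply_eq_conj_smul_of_apply_eq_smul
    {𝕜 E : Type*} [RCLike 𝕜] [NormedAddCommGroup E] [InnerProductSpace 𝕜 E] [CompleteSpace E]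
    (T : E →L[𝕜] E) {c : 𝕜} {x : E} (hx : T x = c • x) (hT : ‖T‖ ≤ ‖c‖) :
    adjoint T x = conj c • x := by
  have hinner : ⟪adjoint T x, conj c • x⟫_𝕜 = ((‖c‖ * ‖x‖) ^ 2 : ℝ) := by
    rw [inner_smul_right, adjoint_inner_left, hx, inner_smul_right, inner_self_eq_norm_sq_to_K,
      ← mul_assoc, RCLike.conj_mul]
    push_cast
    ring
  have hnorm : ‖adjoint T x‖ ≤ ‖c‖ * ‖x‖ := calc
    ‖adjoint T x‖ ≤ ‖adjoint T‖ * ‖x‖ := (adjoint T).le_opNorm x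
    _ = ‖T‖ * ‖x‖ := by rw [LinearIsometryEquiv.norm_map]
    _ ≤ ‖c‖ * ‖x‖ := by gcongr
  have hsq : ‖adjoint T x - conj c • x‖ ^ 2 ≤ 0 := by
    rw [norm_sub_sq (𝕜 := 𝕜), hinner, RCLike.ofReal_re, norm_smul, RCLike.norm_conj]
    nlinarith [norm_nonneg (adjoint T x), mul_nonneg (norm_nonneg c) (norm_nonneg x)]
  rw [← sub_eq_zero, ← norm_eq_zero]
  nlinarith [norm_nonneg (adjoint T x - conj c • x)]

open Matrix in
theorem col_sum_eq_of_abs_row_sum_eq_specNorm_general {n : ℕ}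
    (A : Matrix (Fin n) (Fin n) ℂ) (c : ℂ)
    (hrow : ∀ i, ∑ j, A i j = c) (hc : ‖c‖ = specNorm A) :
    ∀ j, ∑ i, A i j = c := by
  intro j
  set T := toEuclideanCLM (𝕜 := ℂ) A
  have hT : T (WithLp.toLp 2 1) = c • WithLp.toLp 2 1 := by
    ext i
    simp [T, toEuclideanCLM_toLp, mulVec, dotProduct, hrow]
  have hadj := T.adjoint_apply_eq_conj_smul_of_apply_eq_smul hT hc.ge
  rw [← ContinuousLinearMap.star_eq_adjoint, ← map_star, star_eq_conjTranspose] at hadj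
  have hcol : conj (∑ i, A i j) = conj c := by
    simpa [toEuclideanCLM_toLp, mulVec, dotProduct] using congrArg (· j) hadj
  exact (starRingEnd ℂ).injective hcol

theorem col_sum_eq_of_abs_row_sum_eq_specNorm {n : ℕ} (hn : 0 < n)
    (A : Matrix (Fin n) (Fin n) ℂ) (c : ℂ)
    (hrow : ∀ i, ∑ j, A i j = c) (hc : ‖c‖ = specNorm A) :
    ∀ j, ∑ i, A i j = c :=
  col_sum_eq_of_abs_row_sum_eq_specNorm_general A c hrow hc
end

section
/- Let A ∈ M_n(ℂ) with ‖A‖₂ = σ and suppose every row sum of A has absolute value σ, i.e., |∑_j A_{ij}| = σ for all i. Then A = σ·W·D where W = diag(e^{iθ₁},…,e^{iθ_n}) is a diagonal unitary matrix (with ∑_j A_{ij} = σe^{iθ_i}) and D is a matrix with all row sums and column sums equal to 1 satisfying ‖D‖₂ = 1. -/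
/-!
The all-ones vector `𝟙` satisfies `‖A 𝟙‖ = σ ‖𝟙‖ = ‖A‖ ‖𝟙‖`, and a vector at which an operator `T`
attains its norm is an eigenvector of `T⋆ T` for the eigenvalue `‖T‖²` (equality in
Cauchy–Schwarz). Writing `A 𝟙 = σ w` with `w` unimodular, this gives `Aᴴ w = σ 𝟙`: the columns of
`W⋆ A` sum to `σ`, where `W = diagonal w`. So `D = σ⁻¹ W⋆ A` has all row and column sums `1`, and
`‖D‖ = σ⁻¹ ‖A‖ = 1` because `W` is unitary.
-/

open RCLike ContinuousLinearMap Matrix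
open scoped InnerProductSpace Matrix.Norms.L2Operator

variable {𝕜 : Type*} [RCLike 𝕜]

theorem eq_smul_of_norm_le_of_re_inner_eq {E : Type*} [NormedAddCommGroup E]
    [InnerProductSpace 𝕜 E]
    {u v : E} {c : ℝ} (hv : ‖v‖ ≤ c * ‖u‖) (hvu : re ⟪v, u⟫_𝕜 = c * ‖u‖ ^ 2) :
    v = (c : 𝕜) • u := by
  have hsq : ‖v‖ ^ 2 ≤ (c * ‖u‖) ^ 2 := pow_le_pow_left₀ (norm_nonneg v) hv 2
  have hdist : ‖v - (c : 𝕜) • u‖ ^ 2 ≤ 0 := by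
    rw [norm_sub_sq (𝕜 := 𝕜), inner_smul_right, re_ofReal_mul, hvu, norm_smul, norm_ofReal,
      mul_pow, sq_abs]
    nlinarith
  rw [← sub_eq_zero, ← norm_eq_zero]
  exact pow_eq_zero_iff two_ne_zero |>.mp (le_antisymm hdist (by positivity))

theorem ContinuousLinearMap.adjoint_apply_apply_of_norm_apply_eq {E F : Type*}
    [NormedAddCommGroup E] [InnerProductSpace 𝕜 E] [CompleteSpace E]
    [NormedAddCommGroup F] [InnerProductSpace 𝕜 F] [CompleteSpace F]
    (T : E →L[𝕜] F) {u : E} (hu : ‖T u‖ = ‖T‖ * ‖u‖) :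
    adjoint T (T u) = ((‖T‖ ^ 2 : ℝ) : 𝕜) • u := by
  refine eq_smul_of_norm_le_of_re_inner_eq ?_ ?_
  · calc ‖adjoint T (T u)‖ ≤ ‖adjoint T‖ * ‖T u‖ := le_opNorm _ _
      _ = ‖T‖ ^ 2 * ‖u‖ := by rw [LinearIsometryEquiv.norm_map, hu]; ring
  · rw [adjoint_inner_left, inner_self_eq_norm_sq, hu]; ring

theorem star_mul_self_eq_one_of_norm_eq_one {ι : Type*} {v : ι → 𝕜} (hv : ∀ i, ‖v i‖ = 1) :
    star v * v = 1 :=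
  funext fun i => by simp [RCLike.conj_mul, hv i]

variable {ι : Type*} [Fintype ι] [DecidableEq ι]

theorem Matrix.conjTranspose_mulVec_mulVec_of_norm_mulVec_eq (A : Matrix ι ι 𝕜) {x : ι → 𝕜}
    (hx : ‖WithLp.toLp 2 (A *ᵥ x)‖ = ‖A‖ * ‖WithLp.toLp 2 x‖) :
    Aᴴ *ᵥ (A *ᵥ x) = ((‖A‖ ^ 2 : ℝ) : 𝕜) • x := by
  have h := (toEuclideanCLM (𝕜 := 𝕜) A).adjoint_apply_apply_of_norm_apply_eq hx
  rw [← star_eq_adjoint, ← map_star, star_eq_conjTranspose] at h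
  exact congrArg WithLp.ofLp h

theorem Matrix.diagonal_mem_unitary {v : ι → 𝕜} (hv : ∀ i, ‖v i‖ = 1) :
    diagonal v ∈ unitary (Matrix ι ι 𝕜) := by
  have hconj := star_mul_self_eq_one_of_norm_eq_one hv
  rw [Unitary.mem_iff, star_eq_conjTranspose, diagonal_conjTranspose, diagonal_mul_diagonal,
    diagonal_mul_diagonal, ← Pi.mul_def, ← Pi.mul_def, hconj, mul_comm, hconj]
  exact ⟨diagonal_one, diagonal_one⟩

theorem Matrix.exists_eq_smul_diagonal_mul_of_mulVec_one (A : Matrix ι ι 𝕜) {σ : ℝ} (hσ : 0 < σ)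
    (hA : ‖A‖ = σ) {w : ι → 𝕜} (hw : ∀ i, ‖w i‖ = 1) (hrow : A *ᵥ 1 = (σ : 𝕜) • w) :
    ∃ D : Matrix ι ι 𝕜, D *ᵥ 1 = 1 ∧ 1 ᵥ* D = 1 ∧ ‖D‖ = 1 ∧
      A = (σ : 𝕜) • (diagonal w * D) := by
  have hσ𝕜 : (σ : 𝕜) ≠ 0 := ofReal_ne_zero.mpr hσ.ne'
  have hW := diagonal_mem_unitary hw
  have hWstar := diagonal_mem_unitary (v := star w) fun i => (norm_star (w i)).trans (hw i)
  have hmax : ‖WithLp.toLp 2 (A *ᵥ 1)‖ = ‖A‖ * ‖WithLp.toLp 2 (1 : ι → 𝕜)‖ := by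
    have : ‖WithLp.toLp 2 w‖ = ‖WithLp.toLp 2 (1 : ι → 𝕜)‖ := by
      simp [EuclideanSpace.norm_eq, hw]
    rw [hrow, WithLp.toLp_smul, norm_smul, norm_ofReal, abs_of_pos hσ, this, hA]
  have hcol : star w ᵥ* A = (σ : 𝕜) • 1 := by
    have h := A.conjTranspose_mulVec_mulVec_of_norm_mulVec_eq hmax
    rw [hrow, mulVec_smul, hA, ofReal_pow, pow_two, mul_smul] at h
    have h' := congrArg star (smul_right_injective _ hσ𝕜 h)
    rwa [star_mulVec, conjTranspose_conjTranspose, star_smul, star_one, RCLike.star_def,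
      conj_ofReal] at h'
  refine ⟨(σ⁻¹ : 𝕜) • (diagonal (star w) * A), ?_, ?_, ?_, ?_⟩
  · rw [smul_mulVec, ← mulVec_mulVec, hrow, mulVec_smul, smul_smul, inv_mul_cancel₀ hσ𝕜,
      one_smul, ← star_mul_self_eq_one_of_norm_eq_one hw]
    exact funext (mulVec_diagonal _ _)
  · have hones : (1 : ι → 𝕜) ᵥ* diagonal (star w) = star w :=
      funext fun i => by rw [vecMul_diagonal, Pi.one_apply, one_mul]
    rw [vecMul_smul, ← vecMul_vecMul, hones, hcol, smul_smul, inv_mul_cancel₀ hσ𝕜, one_smul]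
  · rw [norm_smul, CStarRing.norm_coe_unitary_mul ⟨_, hWstar⟩, norm_inv, norm_ofReal,
      abs_of_pos hσ, hA, inv_mul_cancel₀ hσ.ne']
  · rw [mul_smul_comm, smul_smul, mul_inv_cancel₀ hσ𝕜, one_smul, ← mul_assoc,
      ← diagonal_conjTranspose, ← star_eq_conjTranspose, Unitary.mul_star_self_of_mem hW, one_mul]

theorem decomposition_of_unimodular_row_sums_general {n : ℕ}
    (A : Matrix (Fin n) (Fin n) ℂ) (σ : ℝ) (hσpos : 0 < σ) (hσ : specNorm A = σ)
    (hrow : ∀ i, ‖∑ j, A i j‖ = σ) :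
    ∃ (θ : Fin n → ℝ) (D : Matrix (Fin n) (Fin n) ℂ),
      (∀ i, ∑ j, A i j = σ * Complex.exp (θ i * Complex.I)) ∧
      (∀ i, ∑ j, D i j = 1) ∧ (∀ j, ∑ i, D i j = 1) ∧ specNorm D = 1 ∧
      A = (σ : ℂ) • ((Matrix.diagonal fun i => Complex.exp (θ i * Complex.I)) * D) := by
  set θ : Fin n → ℝ := fun i => Complex.arg (∑ j, A i j)
  have hrowsum (i : Fin n) : ∑ j, A i j = σ * Complex.exp (θ i * Complex.I) := by
    rw [← hrow i]
    exact (Complex.norm_mul_exp_arg_mul_I _).symm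
  have hmulVec : A *ᵥ 1 = (σ : ℂ) • fun i => Complex.exp (θ i * Complex.I) :=
    funext fun i => by simpa [mulVec, dotProduct] using hrowsum i
  obtain ⟨D, hDrow, hDcol, hDnorm, hAD⟩ := A.exists_eq_smul_diagonal_mul_of_mulVec_one hσpos hσ
    (fun i => Complex.norm_exp_ofReal_mul_I (θ i)) hmulVec
  refine ⟨θ, D, hrowsum, fun i => ?_, fun j => ?_, hDnorm, hAD⟩
  · simpa [mulVec, dotProduct] using congrFun hDrow i
  · simpa [vecMul, dotProduct] using congrFun hDcol j

theorem decomposition_of_unimodular_row_sums {n : ℕ} (hn : 0 < n)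
    (A : Matrix (Fin n) (Fin n) ℂ) (σ : ℝ) (hσpos : 0 < σ) (hσ : specNorm A = σ)
    (hrow : ∀ i, ‖∑ j, A i j‖ = σ) :
    ∃ (θ : Fin n → ℝ) (D : Matrix (Fin n) (Fin n) ℂ),
      (∀ i, ∑ j, A i j = σ * Complex.exp (θ i * Complex.I)) ∧
      (∀ i, ∑ j, D i j = 1) ∧ (∀ j, ∑ i, D i j = 1) ∧ specNorm D = 1 ∧
      A = (σ : ℂ) • ((Matrix.diagonal fun i => Complex.exp (θ i * Complex.I)) * D) :=
  decomposition_of_unimodular_row_sums_general A σ hσpos hσ hrow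
end

section
/- Let A ∈ M_n(ℂ) with ‖A‖₂ = σ and suppose every column sum of A has absolute value σ. Then A = σ·D·W where W is a diagonal unitary matrix with diagonal entries the unit-modulus phases of the column sums, and D is a 1-generalized doubly stochastic matrix with ‖D‖₂ = 1. -/
/-!
Write the column sums as `σ wⱼ` with `|wⱼ| = 1` and put `D = σ⁻¹ A W*`, `W = diag w`. Since `W` is
unitary, `‖D‖₂ = 1`, and the column sums of `D` are `σ⁻¹ σ wⱼ w̄ⱼ = 1`, i.e. `Dᴴ 𝟙 = 𝟙`. The row sums
come from the fact that a contraction `T` with `T* x = x` also has `T x = x`: then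
`‖T x - x‖² = ‖T x‖² - 2 Re ⟪T x, x⟫ + ‖x‖² = ‖T x‖² - ‖x‖² ≤ 0`.
-/

open scoped InnerProductSpace Matrix.Norms.L2Operator

theorem ContinuousLinearMap.apply_eq_self_of_adjoint_apply_eq_self {𝕜 E : Type*} [RCLike 𝕜]
    [NormedAddCommGroup E] [InnerProductSpace 𝕜 E] [CompleteSpace E] {T : E →L[𝕜] E}
    (hT : ‖T‖ ≤ 1) {x : E} (hx : adjoint T x = x) : T x = x := by
  have hinner : RCLike.re ⟪T x, x⟫_𝕜 = ‖x‖ ^ 2 := by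
    rw [← adjoint_inner_right, hx, inner_self_eq_norm_sq]
  have hle : ‖T x‖ ≤ ‖x‖ := T.le_of_opNorm_le hT x |>.trans_eq (one_mul _)
  have hsq : ‖T x - x‖ ^ 2 ≤ 0 := by
    rw [norm_sub_sq (𝕜 := 𝕜), hinner]
    nlinarith [norm_nonneg (T x)]
  rw [← sub_eq_zero, ← norm_eq_zero]
  exact pow_eq_zero_iff two_ne_zero |>.mp (hsq.antisymm (sq_nonneg _))

namespace Matrix

variable {n 𝕜 : Type*} [Fintype n] [DecidableEq n]

theorem diagonal_mem_unitary_s7 {α : Type*} [Semiring α] [StarRing α] {v : n → α}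
    (hv : ∀ i, v i ∈ unitary α) : diagonal v ∈ unitary (Matrix n n α) := by
  rw [Unitary.mem_iff, star_eq_conjTranspose, diagonal_conjTranspose, diagonal_mul_diagonal,
    diagonal_mul_diagonal, ← diagonal_one]
  exact ⟨congrArg diagonal (funext fun i => Unitary.star_mul_self_of_mem (hv i)),
    congrArg diagonal (funext fun i => Unitary.mul_star_self_of_mem (hv i))⟩

variable [RCLike 𝕜]

theorem mulVec_eq_self_of_conjTranspose_mulVec_eq_self {D : Matrix n n 𝕜} (hD : ‖D‖ ≤ 1)
    {v : n → 𝕜} (hv : Dᴴ *ᵥ v = v) : D *ᵥ v = v := by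
  have hadj : (toEuclideanCLM (𝕜 := 𝕜) D).adjoint (WithLp.toLp 2 v) = WithLp.toLp 2 v := by
    rw [← ContinuousLinearMap.star_eq_adjoint, ← map_star, toEuclideanCLM_toLp,
      star_eq_conjTranspose, hv]
  simpa using congrArg WithLp.ofLp
    ((toEuclideanCLM (𝕜 := 𝕜) D).apply_eq_self_of_adjoint_apply_eq_self hD hadj)

theorem sum_row_eq_one_of_sum_col_eq_one {D : Matrix n n 𝕜} (hD : ‖D‖ ≤ 1)
    (hcol : ∀ j, ∑ i, D i j = 1) (i : n) : ∑ j, D i j = 1 := by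
  have hstar : Dᴴ *ᵥ 1 = 1 := funext fun j => by
    simp only [mulVec, dotProduct, conjTranspose_apply, Pi.one_apply, mul_one]
    rw [← star_sum, hcol j, star_one]
  simpa [mulVec, dotProduct] using
    congrFun (mulVec_eq_self_of_conjTranspose_mulVec_eq_self hD hstar) i

end Matrix

theorem Complex.exp_ofReal_mul_I_mem_unitary (θ : ℝ) :
    Complex.exp (θ * Complex.I) ∈ unitary ℂ := by
  rw [Unitary.mem_iff_star_mul_self, Complex.star_def, Complex.conj_mul',
    Complex.norm_exp_ofReal_mul_I, Complex.ofReal_one, one_pow]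

open Matrix

theorem decomposition_of_unimodular_col_sums_general {n : ℕ}
    (A : Matrix (Fin n) (Fin n) ℂ) (σ : ℝ) (hσpos : 0 < σ) (hσ : specNorm A = σ)
    (hcol : ∀ j, ‖∑ i, A i j‖ = σ) :
    ∃ (γ : Fin n → ℝ) (D : Matrix (Fin n) (Fin n) ℂ),
      (∀ j, ∑ i, A i j = σ * Complex.exp (γ j * Complex.I)) ∧
      (∀ i, ∑ j, D i j = 1) ∧ (∀ j, ∑ i, D i j = 1) ∧ specNorm D = 1 ∧
      A = (σ : ℂ) • (D * Matrix.diagonal fun j => Complex.exp (γ j * Complex.I)) := by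
  set γ : Fin n → ℝ := fun j => (∑ i, A i j).arg
  set w : Fin n → ℂ := fun j => Complex.exp (γ j * Complex.I)
  have hw (j : Fin n) : w j ∈ unitary ℂ := Complex.exp_ofReal_mul_I_mem_unitary (γ j)
  have hU : diagonal w ∈ unitary (Matrix (Fin n) (Fin n) ℂ) := diagonal_mem_unitary_s7 hw
  have hsum (j : Fin n) : ∑ i, A i j = σ * w j := by
    rw [← hcol j]
    exact (Complex.norm_mul_exp_arg_mul_I _).symm
  have hσ0 : (σ : ℂ) ≠ 0 := Complex.ofReal_ne_zero.mpr hσpos.ne'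
  set D := (σ : ℂ)⁻¹ • (A * star (diagonal w))
  have hnorm : ‖D‖ = 1 := by
    rw [norm_smul, CStarRing.norm_mul_mem_unitary _ (Unitary.star_mem hU), cstar_norm_def,
      ← specNorm, hσ, norm_inv, Complex.norm_real, Real.norm_of_nonneg hσpos.le,
      inv_mul_cancel₀ hσpos.ne']
  have hcolD (j : Fin n) : ∑ i, D i j = 1 := by
    simp only [D, Matrix.smul_apply, star_eq_conjTranspose, diagonal_conjTranspose, mul_diagonal,
      smul_eq_mul, ← Finset.mul_sum, ← Finset.sum_mul, hsum j, Pi.star_apply]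
    rw [mul_assoc, Unitary.mul_star_self_of_mem (hw j), mul_one, inv_mul_cancel₀ hσ0]
  refine ⟨γ, D, hsum, sum_row_eq_one_of_sum_col_eq_one hnorm.le hcolD, hcolD, hnorm, ?_⟩
  rw [smul_mul_assoc, smul_smul, mul_inv_cancel₀ hσ0, one_smul, Matrix.mul_assoc,
    Unitary.star_mul_self_of_mem hU, Matrix.mul_one]

theorem decomposition_of_unimodular_col_sums {n : ℕ} (hn : 0 < n)
    (A : Matrix (Fin n) (Fin n) ℂ) (σ : ℝ) (hσpos : 0 < σ) (hσ : specNorm A = σ)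
    (hcol : ∀ j, ‖∑ i, A i j‖ = σ) :
    ∃ (γ : Fin n → ℝ) (D : Matrix (Fin n) (Fin n) ℂ),
      (∀ j, ∑ i, A i j = σ * Complex.exp (γ j * Complex.I)) ∧
      (∀ i, ∑ j, D i j = 1) ∧ (∀ j, ∑ i, D i j = 1) ∧ specNorm D = 1 ∧
      A = (σ : ℂ) • (D * Matrix.diagonal fun j => Complex.exp (γ j * Complex.I)) :=
  decomposition_of_unimodular_col_sums_general A σ hσpos hσ hcol
end
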